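/- There is a length-preserving bijection ψ between Łukasiewicz paths with no flat step at positive height and Motzkin paths, defined recursively by ψ(ε) = ε, ψ(FL) = Fψ(L), and ψ(U_k L₁ D L₂ D ... L_k D L) = U ψ(L₁) F ψ(L₂) F ... ψ(L_k) D ψ(L). -/

import Mathlib

/-- A Łukasiewicz path: vertical step components, each `≥ -1`, all partial sums
nonnegative, total sum `0`. -/
def IsLukas (w : List ℤ) : Prop :=
  (∀ s ∈ w, -1 ≤ s) ∧ (∀ k, 0 ≤ (w.take k).sum) ∧ w.sum = 0

/-- A Motzkin path: a Łukasiewicz path using only steps `(1,1)`, `(1,0)`, `(1,-1)`. -/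
def IsMotzkin (w : List ℤ) : Prop :=
  IsLukas w ∧ ∀ s ∈ w, s ≤ 1

/-- No flat step at positive height: every flat step starts at ordinate `0`. -/
def NoFlatAtPosHeight (w : List ℤ) : Prop :=
  ∀ j : ℕ, w[j]? = some 0 → (w.take j).sum = 0

/-! ψ is computed by a left-to-right transducer with a stack recording, for each up step `U_k`
not yet closed, how many of its `k` down steps are still to come: a down step becomes `D` when it
closes its `U_k` and `F` otherwise. The recursive equations hold because a Łukasiewicz subpath
returns the stack to the state it found it in. Conversely, a Motzkin path is decoded from right
to left: a `D` opens a block, each `F` inside it lengthens the block, and the `U` closing it is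
sent back to `U_k`, `k` being the block size. Since ψ sends a flat step at positive height to `F`
just like a non-closing down step, such flat steps must be excluded; without them the two
transducers are mutually inverse, by induction along the path, the stack height being the height
of the path. -/

namespace Lukasiewicz

def IsLukasFrom (h : ℤ) (w : List ℤ) : Prop :=
  (∀ s ∈ w, -1 ≤ s) ∧ (∀ k, 0 ≤ h + (w.take k).sum) ∧ h + w.sum = 0

def NoFlatFrom (h : ℤ) (w : List ℤ) : Prop :=
  ∀ j : ℕ, w[j]? = some 0 → h + (w.take j).sum = 0

def IsMotzkinSuffix (m : List ℤ) : Prop :=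
  (∀ t ∈ m, -1 ≤ t ∧ t ≤ 1) ∧ ∀ k, (m.drop k).sum ≤ 0

lemma IsLukasFrom.nonneg {h : ℤ} {w : List ℤ} (hw : IsLukasFrom h w) : 0 ≤ h := by
  simpa using hw.2.1 0

@[simp] lemma isLukasFrom_nil {h : ℤ} : IsLukasFrom h [] ↔ h = 0 := by
  simp only [IsLukasFrom, List.not_mem_nil, List.take_nil, List.sum_nil, add_zero]
  constructor
  · exact fun H => H.2.2
  · rintro rfl
    simp

lemma isLukasFrom_cons {h s : ℤ} {w : List ℤ} :
    IsLukasFrom h (s :: w) ↔ -1 ≤ s ∧ 0 ≤ h ∧ IsLukasFrom (h + s) w := by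
  simp only [IsLukasFrom, List.forall_mem_cons, List.sum_cons, ← add_assoc]
  constructor
  · rintro ⟨⟨hs, hw⟩, hk, hsum⟩
    exact ⟨hs, by simpa using hk 0, hw, fun k => by simpa [← add_assoc] using hk (k + 1), hsum⟩
  · rintro ⟨hs, hh, hw, hk, hsum⟩
    refine ⟨⟨hs, hw⟩, ?_, hsum⟩
    rintro (_ | k)
    · simpa using hh
    · simpa [← add_assoc] using hk k

lemma isLukasFrom_zero {w : List ℤ} : IsLukasFrom 0 w ↔ IsLukas w := by
  simp [IsLukasFrom, IsLukas]

@[simp] lemma noFlatFrom_nil {h : ℤ} : NoFlatFrom h [] := by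
  simp [NoFlatFrom]

lemma noFlatFrom_cons {h s : ℤ} {w : List ℤ} :
    NoFlatFrom h (s :: w) ↔ (s = 0 → h = 0) ∧ NoFlatFrom (h + s) w := by
  simp only [NoFlatFrom]
  constructor
  · intro H
    exact ⟨fun hs => by simpa using H 0 (by simp [hs]),
      fun j hj => by simpa [add_assoc] using H (j + 1) (by simpa using hj)⟩
  · rintro ⟨hs, H⟩ (_ | j) hj
    · simpa using hs (by simpa using hj)
    · simpa [add_assoc] using H j (by simpa using hj)

lemma noFlatFrom_zero {w : List ℤ} : NoFlatFrom 0 w ↔ NoFlatAtPosHeight w := by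
  simp [NoFlatFrom, NoFlatAtPosHeight]

lemma isMotzkinSuffix_cons {t : ℤ} {m : List ℤ} :
    IsMotzkinSuffix (t :: m) ↔ (-1 ≤ t ∧ t ≤ 1) ∧ t + m.sum ≤ 0 ∧ IsMotzkinSuffix m := by
  simp only [IsMotzkinSuffix, List.forall_mem_cons]
  constructor
  · rintro ⟨⟨ht, hm⟩, hk⟩
    exact ⟨ht, by simpa using hk 0, hm, fun k => by simpa using hk (k + 1)⟩
  · rintro ⟨ht, hsum, hm, hk⟩
    refine ⟨⟨ht, hm⟩, ?_⟩
    rintro (_ | k)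
    · simpa using hsum
    · simpa using hk k

lemma isMotzkinSuffix_of_isMotzkin {m : List ℤ} (hm : IsMotzkin m) : IsMotzkinSuffix m := by
  obtain ⟨⟨hstep, hprefix, hsum⟩, hle⟩ := hm
  refine ⟨fun t ht => ⟨hstep t ht, hle t ht⟩, fun k => ?_⟩
  have := List.sum_take_add_sum_drop m k
  linarith [hprefix k]

/-- A stack entry `c` stands for an up step still waiting for `c + 1` down steps. -/
def stackHeight (st : List ℕ) : ℕ := st.sum + st.length

@[simp] lemma stackHeight_nil : stackHeight [] = 0 := rfl

@[simp] lemma stackHeight_cons (c : ℕ) (st : List ℕ) :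
    stackHeight (c :: st) = c + 1 + stackHeight st := by
  simp only [stackHeight, List.sum_cons, List.length_cons]
  ring

lemma stackHeight_eq_zero {st : List ℕ} : stackHeight st = 0 ↔ st = [] := by
  cases st <;> simp

def psiStep (st : List ℕ) (s : ℤ) : List ℕ :=
  if s < 0 then
    match st with
    | [] => []
    | 0 :: st => st
    | (c + 1) :: st => c :: st
  else if s = 0 then st
  else (s - 1).toNat :: st

def psiOut (st : List ℕ) (s : ℤ) : ℤ :=
  if s < 0 then
    match st with
    | (_ + 1) :: _ => 0
    | _ => -1
  else if s = 0 then 0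
  else 1

def psiFrom : List ℕ → List ℤ → List ℤ
  | _, [] => []
  | st, s :: w => psiOut st s :: psiFrom (psiStep st s) w

def psiInvStep (st : List ℕ) (t : ℤ) : List ℕ :=
  if t < 0 then 0 :: st
  else if t = 0 then
    match st with
    | [] => []
    | c :: st => (c + 1) :: st
  else st.tail

-- On an empty stack an up step is sent to `0`, so that `stackHeight_psiInvStep` needs no hypothesis.
def psiInvOut (st : List ℕ) (t : ℤ) : ℤ :=
  if t < 0 then -1
  else if t = 0 then
    match st with
    | [] => 0
    | _ :: _ => -1
  else
    match st with
    | [] => 0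
    | c :: _ => c + 1

/-- `psiInv m` is the preimage of `m` together with the stack from which `psiFrom` produces it. -/
def psiInv : List ℤ → List ℤ × List ℕ
  | [] => ([], [])
  | t :: m => (psiInvOut (psiInv m).2 t :: (psiInv m).1, psiInvStep (psiInv m).2 t)

@[simp] lemma psiFrom_nil (st : List ℕ) : psiFrom st [] = [] := rfl

@[simp] lemma psiFrom_cons (st : List ℕ) (s : ℤ) (w : List ℤ) :
    psiFrom st (s :: w) = psiOut st s :: psiFrom (psiStep st s) w := rfl

@[simp] lemma psiInv_nil : psiInv [] = ([], []) := rfl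

@[simp] lemma psiInv_cons (t : ℤ) (m : List ℤ) :
    psiInv (t :: m) =
      (psiInvOut (psiInv m).2 t :: (psiInv m).1, psiInvStep (psiInv m).2 t) := rfl

lemma psiStep_of_pos {s : ℤ} (hs : 0 < s) (st : List ℕ) : psiStep st s = (s - 1).toNat :: st := by
  simp [psiStep, hs.not_gt, hs.ne']

lemma psiOut_of_pos {s : ℤ} (hs : 0 < s) (st : List ℕ) : psiOut st s = 1 := by
  simp [psiOut, hs.not_gt, hs.ne']

lemma psiOut_mem_Icc (st : List ℕ) (s : ℤ) : psiOut st s ∈ Set.Icc (-1) 1 := by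
  unfold psiOut
  split_ifs
  · split <;> simp
  · simp
  · simp

lemma neg_one_le_psiInvOut (st : List ℕ) (t : ℤ) : -1 ≤ psiInvOut st t := by
  unfold psiInvOut
  split_ifs
  · simp
  · split <;> simp
  · split <;> omega

lemma stackHeight_psiInvStep (st : List ℕ) (t : ℤ) :
    (stackHeight (psiInvStep st t) : ℤ) + psiInvOut st t = stackHeight st := by
  unfold psiInvStep psiInvOut
  split_ifs <;> rcases st with _ | ⟨c, st⟩ <;> simp <;> omega

lemma psiInvStep_eq_nil_of_psiInvOut_eq_zero (st : List ℕ) (t : ℤ) (h : psiInvOut st t = 0) :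
    psiInvStep st t = [] := by
  unfold psiInvStep
  unfold psiInvOut at h
  split_ifs at h ⊢ <;> rcases st with _ | ⟨c, st⟩ <;> simp at h ⊢
  omega

section LocalSteps

variable {st : List ℕ} {s t : ℤ}

lemma stackHeight_psiStep (hs : -1 ≤ s) (h : 0 ≤ (stackHeight st : ℤ) + s) :
    (stackHeight (psiStep st s) : ℤ) = stackHeight st + s := by
  unfold psiStep
  split_ifs with hneg hzero
  · rcases st with _ | ⟨_ | c, st⟩ <;> simp at h ⊢ <;> omega
  · simp [hzero]
  · simp; omega

lemma length_psiStep (hs : -1 ≤ s) (h : 0 ≤ (stackHeight st : ℤ) + s) :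
    ((psiStep st s).length : ℤ) = st.length + psiOut st s := by
  unfold psiStep psiOut
  split_ifs with hneg hzero
  · rcases st with _ | ⟨_ | c, st⟩ <;> simp at h ⊢
    omega
  · simp
  · simp

lemma psiStep_psiOut_append (hs : -1 ≤ s) (h : 0 ≤ (stackHeight st : ℤ) + s) (st' : List ℕ) :
    psiStep (st ++ st') s = psiStep st s ++ st' ∧ psiOut (st ++ st') s = psiOut st s := by
  unfold psiStep psiOut
  split_ifs with hneg hzero
  · rcases st with _ | ⟨_ | c, st⟩ <;> simp at h ⊢
    omega
  · simp
  · simp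

lemma psiInv_psiStep (hs : -1 ≤ s) (h : 0 ≤ (stackHeight st : ℤ) + s)
    (hflat : s = 0 → stackHeight st = 0) :
    psiInvOut (psiStep st s) (psiOut st s) = s ∧ psiInvStep (psiStep st s) (psiOut st s) = st := by
  unfold psiStep psiOut
  split_ifs with hneg hzero
  · rcases st with _ | ⟨_ | c, st⟩ <;> simp [psiInvOut, psiInvStep] at h ⊢ <;> omega
  · obtain rfl : st = [] := stackHeight_eq_zero.mp (hflat hzero)
    simp [psiInvOut, psiInvStep, hzero]
  · simp [psiInvOut, psiInvStep]; omega

lemma length_psiInvStep (ht : -1 ≤ t ∧ t ≤ 1) (hst : t = 1 → st ≠ []) :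
    ((psiInvStep st t).length : ℤ) = st.length - t := by
  unfold psiInvStep
  split_ifs <;> rcases st with _ | ⟨c, st⟩ <;> simp at hst ⊢
  all_goals omega

lemma psiStep_psiInv (ht : -1 ≤ t ∧ t ≤ 1) (hst : t = 1 → st ≠ []) :
    psiOut (psiInvStep st t) (psiInvOut st t) = t ∧
      psiStep (psiInvStep st t) (psiInvOut st t) = st := by
  obtain rfl | rfl | rfl : t = -1 ∨ t = 0 ∨ t = 1 := by omega
  · simp [psiInvStep, psiInvOut, psiStep, psiOut]
  · rcases st with _ | ⟨c, st⟩ <;> simp [psiInvStep, psiInvOut, psiStep, psiOut]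
  · obtain ⟨c, st, rfl⟩ := List.exists_cons_of_ne_nil (hst rfl)
    simp [psiInvStep, psiInvOut, psiStep_of_pos, psiOut_of_pos]

end LocalSteps

lemma eq_nil_of_isLukasFrom_nil {st : List ℕ} (h : IsLukasFrom (stackHeight st) []) : st = [] :=
  stackHeight_eq_zero.mp (by simpa using h)

@[simp] lemma length_psiFrom (st : List ℕ) (w : List ℤ) : (psiFrom st w).length = w.length := by
  induction w generalizing st <;> simp [*]

lemma le_one_of_mem_psiFrom {st : List ℕ} {w : List ℤ} {t : ℤ} (ht : t ∈ psiFrom st w) :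
    t ≤ 1 := by
  induction w generalizing st with
  | nil => simp at ht
  | cons s w ih =>
    rcases List.mem_cons.mp ht with rfl | ht
    · exact (psiOut_mem_Icc st s).2
    · exact ih ht

lemma isLukasFrom_psiFrom {st : List ℕ} {w : List ℤ} (hw : IsLukasFrom (stackHeight st) w) :
    IsLukasFrom st.length (psiFrom st w) := by
  induction w generalizing st with
  | nil => simp [eq_nil_of_isLukasFrom_nil hw]
  | cons s w ih =>
    obtain ⟨hs, -, hw⟩ := isLukasFrom_cons.mp hw
    have hnonneg := hw.nonneg
    refine isLukasFrom_cons.mpr ⟨(psiOut_mem_Icc st s).1, by positivity, ?_⟩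
    rw [← length_psiStep hs hnonneg]
    exact ih (by rwa [stackHeight_psiStep hs hnonneg])

lemma psiFrom_append {σ : List ℕ} {M : List ℤ} (hM : IsLukasFrom (stackHeight σ) M)
    (st : List ℕ) (rest : List ℤ) :
    psiFrom (σ ++ st) (M ++ rest) = psiFrom σ M ++ psiFrom st rest := by
  induction M generalizing σ with
  | nil => simp [eq_nil_of_isLukasFrom_nil hM]
  | cons s M ih =>
    obtain ⟨hs, -, hM⟩ := isLukasFrom_cons.mp hM
    have hnonneg := hM.nonneg
    obtain ⟨hstep, hout⟩ := psiStep_psiOut_append hs hnonneg st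
    simp only [List.cons_append, psiFrom_cons, hstep, hout]
    rw [ih (by rwa [stackHeight_psiStep hs hnonneg])]

lemma psiFrom_append_of_isLukas {M : List ℤ} (hM : IsLukas M) (st : List ℕ) (rest : List ℤ) :
    psiFrom st (M ++ rest) = psiFrom [] M ++ psiFrom st rest :=
  psiFrom_append (σ := []) (isLukasFrom_zero.mpr hM) st rest

lemma psiInv_psiFrom {st : List ℕ} {w : List ℤ} (hw : IsLukasFrom (stackHeight st) w)
    (hflat : NoFlatFrom (stackHeight st) w) : psiInv (psiFrom st w) = (w, st) := by
  induction w generalizing st with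
  | nil => simp [eq_nil_of_isLukasFrom_nil hw]
  | cons s w ih =>
    obtain ⟨hs, -, hw⟩ := isLukasFrom_cons.mp hw
    obtain ⟨hs0, hflat⟩ := noFlatFrom_cons.mp hflat
    have hnonneg := hw.nonneg
    have hheight := stackHeight_psiStep hs hnonneg
    obtain ⟨hout, hstep⟩ := psiInv_psiStep hs hnonneg (fun h0 => by exact_mod_cast hs0 h0)
    rw [psiFrom_cons, psiInv_cons, ih (by rwa [hheight]) (by rwa [hheight]), hout, hstep]

@[simp] lemma length_psiInv_fst (m : List ℤ) : (psiInv m).1.length = m.length := by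
  induction m <;> simp [*]

lemma isLukasFrom_psiInv (m : List ℤ) :
    IsLukasFrom (stackHeight (psiInv m).2) (psiInv m).1 := by
  induction m with
  | nil => simp
  | cons t m ih =>
    rw [psiInv_cons]
    refine isLukasFrom_cons.mpr ⟨neg_one_le_psiInvOut _ t, by positivity, ?_⟩
    rwa [stackHeight_psiInvStep]

lemma noFlatFrom_psiInv (m : List ℤ) :
    NoFlatFrom (stackHeight (psiInv m).2) (psiInv m).1 := by
  induction m with
  | nil => simp
  | cons t m ih =>
    rw [psiInv_cons]
    refine noFlatFrom_cons.mpr ⟨fun h0 => by simp [psiInvStep_eq_nil_of_psiInvOut_eq_zero _ t h0], ?_⟩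
    rwa [stackHeight_psiInvStep]

lemma length_psiInv_snd {m : List ℤ} (hm : IsMotzkinSuffix m) :
    ((psiInv m).2.length : ℤ) = -m.sum := by
  induction m with
  | nil => simp
  | cons t m ih =>
    obtain ⟨ht, hsum, hm⟩ := isMotzkinSuffix_cons.mp hm
    have hlen := ih hm
    rw [psiInv_cons, length_psiInvStep ht (fun h1 => ?_), hlen, List.sum_cons]
    · ring
    · rw [← List.length_pos_iff]
      omega

lemma psiFrom_psiInv {m : List ℤ} (hm : IsMotzkinSuffix m) :
    psiFrom (psiInv m).2 (psiInv m).1 = m := by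
  induction m with
  | nil => simp
  | cons t m ih =>
    obtain ⟨ht, hsum, hm'⟩ := isMotzkinSuffix_cons.mp hm
    have hlen := length_psiInv_snd hm'
    obtain ⟨hout, hstep⟩ := psiStep_psiInv (st := (psiInv m).2) ht (fun h1 => by
      rw [← List.length_pos_iff]
      omega)
    rw [psiInv_cons, psiFrom_cons, hout, hstep, ih hm']

lemma psiInv_snd_eq_nil {m : List ℤ} (hm : IsMotzkin m) : (psiInv m).2 = [] := by
  have hlen := length_psiInv_snd (isMotzkinSuffix_of_isMotzkin hm)
  rw [hm.1.2.2] at hlen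
  simpa using hlen

lemma psiFrom_blocks (L : List ℤ) (M : List ℤ) (Ls : List (List ℤ)) (hM : IsLukas M)
    (hLs : ∀ N ∈ Ls, IsLukas N) :
    psiFrom [Ls.length] (((M :: Ls).map fun N => N ++ [(-1 : ℤ)]).flatten ++ L) =
      (List.intersperse [(0 : ℤ)] ((M :: Ls).map (psiFrom []))).flatten ++
        (-1 : ℤ) :: psiFrom [] L := by
  induction Ls generalizing M with
  | nil =>
    rw [List.map_singleton, List.flatten_singleton, List.append_assoc,
      psiFrom_append_of_isLukas hM]
    simp [psiOut, psiStep]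
  | cons N Ls ih =>
    have hclose (n : ℕ) (w : List ℤ) : psiFrom [n + 1] (-1 :: w) = 0 :: psiFrom [n] w := by
      simp [psiOut, psiStep]
    rw [List.map_cons, List.flatten_cons, List.append_assoc, List.append_assoc,
      psiFrom_append_of_isLukas hM, List.singleton_append, List.length_cons, hclose,
      ih N (hLs N (by simp)) (fun N' hN' => hLs N' (by simp [hN'])),
      List.map_cons, List.map_cons, List.map_cons, List.intersperse_cons_cons]
    simp

end Lukasiewicz

open Lukasiewicz in
theorem psi_bijection :
    ∃ ψ : List ℤ → List ℤ,
      ψ [] = [] ∧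
      (∀ L : List ℤ, IsLukas L → ψ (0 :: L) = 0 :: ψ L) ∧
      (∀ (Ls : List (List ℤ)) (L : List ℤ), Ls ≠ [] →
        (∀ M ∈ Ls, IsLukas M) → IsLukas L →
        ψ ((Ls.length : ℤ) :: ((Ls.map fun M => M ++ [(-1 : ℤ)]).flatten ++ L)) =
          1 :: ((List.intersperse [(0 : ℤ)] (Ls.map ψ)).flatten ++ (-1 : ℤ) :: ψ L)) ∧
      (∀ L : List ℤ, IsLukas L → (ψ L).length = L.length) ∧
      (∀ n : ℕ, Set.BijOn ψ
        {w : List ℤ | IsLukas w ∧ NoFlatAtPosHeight w ∧ w.length = n}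
        {w : List ℤ | IsMotzkin w ∧ w.length = n}) := by
  refine ⟨psiFrom [], rfl, fun L _ => by simp [psiOut, psiStep], ?_,
    fun L _ => length_psiFrom [] L, fun n => ⟨?_, ?_, ?_⟩⟩
  · rintro Ls L hne hLs -
    obtain ⟨M, Ls, rfl⟩ := List.exists_cons_of_ne_nil hne
    rw [psiFrom_cons, psiOut_of_pos (by simp), psiStep_of_pos (by simp)]
    simpa using psiFrom_blocks L M Ls (hLs M (by simp)) (fun N hN => hLs N (by simp [hN]))
  · rintro w ⟨hw, -, rfl⟩
    exact ⟨⟨isLukasFrom_zero.mp (isLukasFrom_psiFrom (st := []) (isLukasFrom_zero.mpr hw)),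
      fun t ht => le_one_of_mem_psiFrom ht⟩, length_psiFrom [] w⟩
  · rintro w₁ ⟨hw₁, hflat₁, -⟩ w₂ ⟨hw₂, hflat₂, -⟩ heq
    have h₁ := psiInv_psiFrom (st := []) (isLukasFrom_zero.mpr hw₁) (noFlatFrom_zero.mpr hflat₁)
    have h₂ := psiInv_psiFrom (st := []) (isLukasFrom_zero.mpr hw₂) (noFlatFrom_zero.mpr hflat₂)
    simpa [heq, h₂] using h₁.symm
  · rintro m ⟨hm, rfl⟩
    have hstack := psiInv_snd_eq_nil hm
    have hlukas := isLukasFrom_psiInv m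
    have hflat := noFlatFrom_psiInv m
    rw [hstack, stackHeight_nil, Nat.cast_zero] at hlukas hflat
    refine ⟨(psiInv m).1, ⟨isLukasFrom_zero.mp hlukas, noFlatFrom_zero.mp hflat,
      length_psiInv_fst m⟩, ?_⟩
    simpa [hstack] using psiFrom_psiInv (isMotzkinSuffix_of_isMotzkin hm)
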